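/- Let d ≥ 3 and fix 0 < ε < 1 < M and an integer m ≥ 1. There exists a constant K such that ℙ-almost surely, for all n large enough and every x ∈ 𝔻(n), the number of sites of T_ε^M(n) in the annulus A_x(n) = D_x(ρ(n) + ν(n)) \ D_x(ρ(n) − ν(n)) is at most K ρ(n)^{d−1} ν(n) g(n)^{−α}. -/

import Mathlib

open MeasureTheory ProbabilityTheory Filter Set
open scoped ENNReal NNReal

/-- Euclidean norm of a point of `ℤ^d`. -/
noncomputable def znorm {d : ℕ} (x : Fin d → ℤ) : ℝ :=
  Real.sqrt (∑ i, ((x i : ℝ)) ^ 2)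

/-- The unit step of the simple random walk indexed by a coordinate and a sign. -/
def stepVec (d : ℕ) (p : Fin d × Bool) : Fin d → ℤ :=
  fun j => if j = p.1 then (if p.2 then 1 else -1) else 0

/-- `Y` is a simple random walk on `ℤ^d` started at `0` under `P`. -/
structure IsSRW {Ω : Type*} [MeasurableSpace Ω] (P : Measure Ω) (d : ℕ)
    (Y : ℕ → Ω → (Fin d → ℤ)) : Prop where
  meas : ∀ k, Measurable (Y k)
  init : ∀ ω, Y 0 ω = 0
  indep : iIndepFun (fun k ω => Y (k + 1) ω - Y k ω) P
  step : ∀ k p, P {ω | Y (k + 1) ω - Y k ω = stepVec d p} = (2 * d : ℝ≥0∞)⁻¹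

/-- i.i.d. heavy-tailed random environment on `ℤ^d`. -/
structure IsEnv {Ω : Type*} [MeasurableSpace Ω] (P : Measure Ω) (d : ℕ) (α : ℝ)
    (L : ℝ → ℝ) (τ : (Fin d → ℤ) → Ω → ℝ) : Prop where
  meas : ∀ x, Measurable (τ x)
  pos : ∀ x ω, 0 < τ x ω
  indep : iIndepFun τ P
  tail : ∀ x u, (1 : ℝ) ≤ u → P {ω | u ≤ τ x ω} = ENNReal.ofReal (u ^ (-α) * (1 + L u))
  decay : Tendsto L atTop (nhds 0)

noncomputable def gscale (α : ℝ) (n : ℕ) : ℝ := (2 : ℝ) ^ ((n : ℝ) / α)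
noncomputable def rscale (n : ℕ) : ℝ := (2 : ℝ) ^ ((n : ℝ) / 2)
noncomputable def rhoscale (d n : ℕ) : ℝ := (2 : ℝ) ^ ((1 - 1 / (3 * (d : ℝ))) * n / 2)
noncomputable def nuscale (d n : ℕ) : ℝ := (2 : ℝ) ^ ((1 / (d : ℝ)) * n / 2)
noncomputable def iotascale (d n : ℕ) : ℝ := (2 : ℝ) ^ ((1 - 2 / (3 * (d : ℝ))) * n / 2)
noncomputable def hscale (d n : ℕ) : ℝ := rscale n / rhoscale d n

/-- the big ball `𝔻(n)` of radius `m · r(n)`. -/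
def bigD (d m n : ℕ) : Set (Fin d → ℤ) := {x | znorm x ≤ m * rscale n}

/-- the cube of side `ℓ` centered at `x`. -/
def cube {d : ℕ} (x : Fin d → ℤ) (ℓ : ℝ) : Set (Fin d → ℤ) :=
  {y | ∀ i, |((y i : ℝ)) - ((x i : ℝ))| ≤ ℓ / 2}

/-- the set of deep traps `T_ε^M(n)`. -/
noncomputable def traps {Ω : Type*} {d : ℕ} (τ : (Fin d → ℤ) → Ω → ℝ) (α : ℝ) (m : ℕ)
    (ε M : ℝ) (n : ℕ) (ω : Ω) : Set (Fin d → ℤ) :=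
  {x ∈ bigD d m n | ε * gscale α n ≤ τ x ω ∧ τ x ω < M * gscale α n}

/-- the set `ℰ(n)` of sites far from all deep traps. -/
noncomputable def calE {Ω : Type*} {d : ℕ} (τ : (Fin d → ℤ) → Ω → ℝ) (α : ℝ) (m : ℕ)
    (ε M : ℝ) (n : ℕ) (ω : Ω) : Set (Fin d → ℤ) :=
  {x ∈ bigD d m n | ∀ y ∈ traps τ α m ε M n ω, nuscale d n < znorm (x - y)}

/-- the set `ℰ₀(n)` of sites of `ℰ(n)` far from the boundary of `𝔻(n)`. -/
noncomputable def calE₀ {Ω : Type*} {d : ℕ} (τ : (Fin d → ℤ) → Ω → ℝ) (α : ℝ) (m : ℕ)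
    (ε M : ℝ) (n : ℕ) (ω : Ω) : Set (Fin d → ℤ) :=
  {x ∈ calE τ α m ε M n ω | ∀ y, y ∉ bigD d m n → rhoscale d n < znorm (x - y)}


/-- the annulus `A_x(n) = D_x(ρ(n)+ν(n)) \ D_x(ρ(n)−ν(n))`. -/
noncomputable def annulus (d : ℕ) (x : Fin d → ℤ) (n : ℕ) : Set (Fin d → ℤ) :=
  {y | znorm (y - x) ≤ rhoscale d n + nuscale d n ∧ ¬ znorm (y - x) ≤ rhoscale d n - nuscale d n}

/-!
The annulus `A_x(n)` has at most `C ρ(n)^{d-1} ν(n)` lattice points: sort them by a coordinate of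
maximal modulus; fixing the other coordinates, that one ranges over `O(ν(n))` integers. Each site
is a deep trap, independently, with probability at most `p = 2 ε^{-α} g(n)^{-α}`, so the expected
number of deep traps in `A_x(n)` is of order `μ(n) = ρ(n)^{d-1} ν(n) g(n)^{-α} = 2^{c_d n}`, where
`c_d = (3d² - 10d + 4) / (6d) > 0` for `d ≥ 3`. A union bound over `k`-subsets gives
`ℙ[at least k deep traps in A_x(n)] ≤ (e |A_x(n)| p / k)^k ≤ 2^{-k}` for `k > K μ(n)`. As `μ(n)`
grows exponentially, this beats the union bound over the `2^{O(n)}` centres `x ∈ 𝔻(n)`, and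
Borel–Cantelli concludes.
-/

open scoped Finset

section LatticeCount

variable {d : ℕ}

lemma abs_le_znorm (x : Fin d → ℤ) (i : Fin d) : |(x i : ℝ)| ≤ znorm x := by
  rw [← Real.sqrt_sq_eq_abs]
  exact Real.sqrt_le_sqrt (Finset.single_le_sum (f := fun j => ((x j : ℝ)) ^ 2)
    (fun _ _ => sq_nonneg _) (Finset.mem_univ i))

lemma znorm_le_subset_piFinset (R : ℝ) :
    {z : Fin d → ℤ | znorm z ≤ R} ⊆
      ↑(Fintype.piFinset fun _ : Fin d => Finset.Icc (-⌊R⌋) ⌊R⌋) := by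
  intro z hz
  rw [Finset.mem_coe, Fintype.mem_piFinset]
  intro i
  rw [Finset.mem_Icc]
  have h := (abs_le_znorm z i).trans hz
  constructor
  · rw [neg_le, Int.le_floor]; push_cast; linarith [neg_abs_le (z i : ℝ)]
  · rw [Int.le_floor]; linarith [le_abs_self (z i : ℝ)]

lemma finite_znorm_le (R : ℝ) : {z : Fin d → ℤ | znorm z ≤ R}.Finite :=
  (Finset.finite_toSet _).subset (znorm_le_subset_piFinset R)

lemma card_Icc_ceil_floor_le {x y ℓ : ℝ} (hℓ : 0 ≤ ℓ) (h : y - x ≤ ℓ) :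
    (#(Finset.Icc ⌈x⌉ ⌊y⌋) : ℝ) ≤ ℓ + 1 := by
  rw [Int.card_Icc]
  rcases le_or_gt (⌊y⌋ + 1 - ⌈x⌉) 0 with h0 | h0
  · rw [Int.toNat_of_nonpos h0]; push_cast; positivity
  · have hcast : (((⌊y⌋ + 1 - ⌈x⌉).toNat : ℕ) : ℝ) = ⌊y⌋ + 1 - ⌈x⌉ := by
      exact_mod_cast Int.toNat_of_nonneg h0.le
    rw [hcast]
    linarith [Int.floor_le y, Int.le_ceil x]

lemma card_Icc_neg_floor_floor_le {R : ℝ} (hR : 0 ≤ R) :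
    (#(Finset.Icc (-⌊R⌋) ⌊R⌋) : ℝ) ≤ 2 * R + 1 := by
  rw [← Int.ceil_neg]
  exact card_Icc_ceil_floor_le (by positivity) (by linarith)

lemma ncard_znorm_le_le {R : ℝ} (hR : 0 ≤ R) :
    ({z : Fin d → ℤ | znorm z ≤ R}.ncard : ℝ) ≤ (2 * R + 1) ^ d := by
  calc ({z : Fin d → ℤ | znorm z ≤ R}.ncard : ℝ)
      ≤ (#(Fintype.piFinset fun _ : Fin d => Finset.Icc (-⌊R⌋) ⌊R⌋) : ℝ) := by
        exact_mod_cast (Set.ncard_le_ncard (znorm_le_subset_piFinset R)).trans_eq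
          (Set.ncard_coe_finset _)
    _ ≤ (2 * R + 1) ^ d := by
        rw [Fintype.card_piFinset_const]; push_cast
        exact pow_le_pow_left₀ (by positivity) (card_Icc_neg_floor_floor_le hR) d

end LatticeCount

lemma sqrt_add_sub_max_le {a δ c : ℝ} (hc : 0 < c) (hδ : 0 ≤ δ) :
    √(a + δ) - max c √a ≤ δ / (2 * c) := by
  set lo := max c √a
  rcases le_or_gt √(a + δ) lo with h | h
  · have : 0 ≤ δ / (2 * c) := by positivity
    linarith
  have hlo : c ≤ lo := le_max_left _ _
  have hhi : √(a + δ) ^ 2 = a + δ := Real.sq_sqrt (by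
    by_contra hneg; rw [Real.sqrt_eq_zero_of_nonpos (by linarith)] at h; linarith)
  have hlo2 : a ≤ lo ^ 2 := by
    rcases le_or_gt 0 a with ha | ha
    · calc a = √a ^ 2 := (Real.sq_sqrt ha).symm
        _ ≤ lo ^ 2 := pow_le_pow_left₀ (Real.sqrt_nonneg a) (le_max_right _ _) 2
    · nlinarith
  -- `(√(a + δ) - lo) (√(a + δ) + lo) ≤ δ` and `√(a + δ) + lo ≥ 2c`
  rw [le_div_iff₀ (by positivity)]
  nlinarith

lemma card_le_of_forall_sq_mem {s : Finset ℤ} {a δ c : ℝ} (hc : 0 < c) (hδ : 0 ≤ δ)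
    (hs : ∀ t ∈ s, c ≤ |(t : ℝ)| ∧ a ≤ (t : ℝ) ^ 2 ∧ (t : ℝ) ^ 2 ≤ a + δ) :
    (#s : ℝ) ≤ δ / c + 2 := by
  set I := Finset.Icc ⌈max c √a⌉ ⌊√(a + δ)⌋
  have habs : ∀ t ∈ s, t ∈ I ∨ -t ∈ I := by
    intro t ht
    obtain ⟨hct, hat, htδ⟩ := hs t ht
    have hlo : max c √a ≤ |(t : ℝ)| :=
      max_le hct (Real.sqrt_sq_eq_abs (t : ℝ) ▸ Real.sqrt_le_sqrt hat)
    have hhi : |(t : ℝ)| ≤ √(a + δ) := Real.sqrt_sq_eq_abs (t : ℝ) ▸ Real.sqrt_le_sqrt htδ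
    rcases le_or_gt 0 t with ht0 | ht0
    · left
      rw [abs_of_nonneg (by exact_mod_cast ht0)] at hlo hhi
      exact Finset.mem_Icc.2 ⟨Int.ceil_le.2 hlo, Int.le_floor.2 hhi⟩
    · right
      rw [abs_of_neg (by exact_mod_cast ht0)] at hlo hhi
      exact Finset.mem_Icc.2 ⟨Int.ceil_le.2 (by push_cast; linarith),
        Int.le_floor.2 (by push_cast; linarith)⟩
  have hsub : s ⊆ I ∪ I.image Neg.neg := by
    intro t ht
    rcases habs t ht with h | h
    · exact Finset.mem_union_left _ h
    · exact Finset.mem_union_right _ (Finset.mem_image.2 ⟨-t, h, neg_neg t⟩)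
  have hI : (#I : ℝ) ≤ δ / (2 * c) + 1 :=
    card_Icc_ceil_floor_le (by positivity) (sqrt_add_sub_max_le hc hδ)
  calc (#s : ℝ) ≤ (#(I ∪ I.image Neg.neg) : ℝ) := by exact_mod_cast Finset.card_le_card hsub
    _ ≤ #I + #I := by
        exact_mod_cast (Finset.card_union_le _ _).trans (Nat.add_le_add_left Finset.card_image_le _)
    _ ≤ δ / c + 2 := by
        have : δ / (2 * c) = δ / c / 2 := by field_simp
        linarith

section Shell

variable {d : ℕ} {r R : ℝ}

lemma card_shell_fibre_le (hr : 0 < r) (hrR : r ≤ R) {i : Fin d} (w : {j // j ≠ i} → ℤ)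
    (F : Finset (Fin d → ℤ))
    (hF : ∀ z ∈ F, (r < znorm z ∧ znorm z ≤ R ∧ ∀ j, z j ^ 2 ≤ z i ^ 2) ∧
      ∀ j : {j // j ≠ i}, z j = w j) :
    (#F : ℝ) ≤ (R ^ 2 - r ^ 2) / (r / √d) + 2 := by
  classical
  have hd : (0 : ℝ) < d := by exact_mod_cast i.pos
  have hinj : Set.InjOn (fun z : Fin d → ℤ => z i) F := by
    intro z₁ h₁ z₂ h₂ h
    funext j
    by_cases hj : j = i
    · exact hj ▸ h
    · rw [(hF z₁ h₁).2 ⟨j, hj⟩, (hF z₂ h₂).2 ⟨j, hj⟩]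
  rw [← Finset.card_image_of_injOn hinj]
  refine card_le_of_forall_sq_mem (a := r ^ 2 - ∑ j : {j // j ≠ i}, (w j : ℝ) ^ 2)
    (by positivity) (by nlinarith) fun t ht => ?_
  obtain ⟨z, hz, rfl⟩ := Finset.mem_image.1 ht
  obtain ⟨⟨hrz, hzR, hmax⟩, hw⟩ := hF z hz
  have hsum : ∑ j, (z j : ℝ) ^ 2 = (z i : ℝ) ^ 2 + ∑ j : {j // j ≠ i}, (w j : ℝ) ^ 2 := by
    rw [Fintype.sum_eq_add_sum_subtype_ne _ i]
    simp only [hw]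
  have hr2 : r ^ 2 < ∑ j, (z j : ℝ) ^ 2 := (Real.lt_sqrt hr.le).1 hrz
  have hR2 : ∑ j, (z j : ℝ) ^ 2 ≤ R ^ 2 := (Real.sqrt_le_left (hr.le.trans hrR)).1 hzR
  have hdom : ∑ j, (z j : ℝ) ^ 2 ≤ d * (z i : ℝ) ^ 2 := by
    simpa using Finset.sum_le_card_nsmul Finset.univ (fun j => (z j : ℝ) ^ 2) _
      fun j _ => (by exact_mod_cast hmax j)
  refine ⟨?_, by linarith, by linarith⟩
  rw [← sq_le_sq₀ (by positivity) (abs_nonneg _), sq_abs, div_pow, Real.sq_sqrt hd.le,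
    div_le_iff₀ hd]
  linarith

lemma ncard_shell_le (hd : 0 < d) (hr : 0 < r) (hrR : r ≤ R) :
    ({z : Fin d → ℤ | r < znorm z ∧ znorm z ≤ R}.ncard : ℝ)
      ≤ d * ((2 * R + 1) ^ (d - 1) * ((R ^ 2 - r ^ 2) / (r / √d) + 2)) := by
  classical
  set B := Fintype.piFinset fun _ : Fin d => Finset.Icc (-⌊R⌋) ⌊R⌋
  set Z : Fin d → Finset (Fin d → ℤ) := fun i =>
    B.filter fun z => r < znorm z ∧ znorm z ≤ R ∧ ∀ j, z j ^ 2 ≤ z i ^ 2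
  -- every point of the shell lies in `Z i` for a coordinate `i` of maximal modulus
  have hcover : {z : Fin d → ℤ | r < znorm z ∧ znorm z ≤ R} ⊆ ↑(Finset.univ.biUnion Z) := by
    intro z hz
    obtain ⟨i, -, hi⟩ := Finset.exists_max_image Finset.univ (fun j => z j ^ 2)
      ⟨⟨0, hd⟩, Finset.mem_univ _⟩
    simp only [Finset.coe_biUnion, Finset.coe_univ, Set.mem_univ, Set.iUnion_true,
      Set.mem_iUnion, Finset.mem_coe, Z, Finset.mem_filter]
    exact ⟨i, znorm_le_subset_piFinset R hz.2, hz.1, hz.2, fun j => hi j (Finset.mem_univ j)⟩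
  have hZ : ∀ i, (#(Z i) : ℝ) ≤ (2 * R + 1) ^ (d - 1) * ((R ^ 2 - r ^ 2) / (r / √d) + 2) := by
    intro i
    set T := Fintype.piFinset fun _ : {j // j ≠ i} => Finset.Icc (-⌊R⌋) ⌊R⌋
    have hmaps : ∀ z ∈ Z i, (fun j : {j // j ≠ i} => z j) ∈ T := fun z hz =>
      Fintype.mem_piFinset.2 fun j => Fintype.mem_piFinset.1 (Finset.mem_filter.1 hz).1 j
    rw [Finset.card_eq_sum_card_fiberwise hmaps]
    push_cast
    have hT : (#T : ℝ) ≤ (2 * R + 1) ^ (d - 1) := by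
      rw [Fintype.card_piFinset, Finset.prod_const, Finset.card_univ, Fintype.card_subtype_compl,
        Fintype.card_fin, Fintype.card_subtype_eq]
      push_cast
      exact pow_le_pow_left₀ (by positivity) (card_Icc_neg_floor_floor_le (hr.le.trans hrR)) _
    calc ∑ w ∈ T, (#{z ∈ Z i | (fun j : {j // j ≠ i} => z j) = w} : ℝ)
        ≤ ∑ _w ∈ T, ((R ^ 2 - r ^ 2) / (r / √d) + 2) := by
          refine Finset.sum_le_sum fun w _ => card_shell_fibre_le hr hrR w _ fun z hz => ?_
          obtain ⟨hzZ, rfl⟩ := Finset.mem_filter.1 hz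
          exact ⟨(Finset.mem_filter.1 hzZ).2, fun _ => rfl⟩
      _ ≤ (2 * R + 1) ^ (d - 1) * ((R ^ 2 - r ^ 2) / (r / √d) + 2) := by
          rw [Finset.sum_const, nsmul_eq_mul]
          exact mul_le_mul_of_nonneg_right hT (by
            have : 0 ≤ R ^ 2 - r ^ 2 := by nlinarith
            positivity)
  calc ({z : Fin d → ℤ | r < znorm z ∧ znorm z ≤ R}.ncard : ℝ)
      ≤ (#(Finset.univ.biUnion Z) : ℝ) := by
        exact_mod_cast (Set.ncard_le_ncard hcover).trans_eq (Set.ncard_coe_finset _)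
    _ ≤ ∑ i, (#(Z i) : ℝ) := by exact_mod_cast Finset.card_biUnion_le
    _ ≤ d * ((2 * R + 1) ^ (d - 1) * ((R ^ 2 - r ^ 2) / (r / √d) + 2)) := by
        simpa using Finset.sum_le_sum fun i (_ : i ∈ Finset.univ) => hZ i

end Shell

section Annulus

variable {d : ℕ}

lemma ncard_annulus_le {ρ ν : ℝ} (hd : 0 < d) (hν : 1 ≤ ν) (hνρ : 2 * ν ≤ ρ) (x : Fin d → ℤ) :
    ({y : Fin d → ℤ | znorm (y - x) ≤ ρ + ν ∧ ¬ znorm (y - x) ≤ ρ - ν}.ncard : ℝ)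
      ≤ d * 4 ^ (d - 1) * (8 * √d + 2) * ρ ^ (d - 1) * ν := by
  have hshell : {y : Fin d → ℤ | znorm (y - x) ≤ ρ + ν ∧ ¬ znorm (y - x) ≤ ρ - ν}
      = (· - x) ⁻¹' {z | ρ - ν < znorm z ∧ znorm z ≤ ρ + ν} := by
    ext y; simp [and_comm]
  rw [hshell, Set.ncard_preimage_of_injective_subset_range sub_left_injective
    fun z _ => ⟨z + x, add_sub_cancel_right z x⟩]
  refine (ncard_shell_le hd (by linarith) (by linarith)).trans ?_
  have hsd : 1 ≤ √(d : ℝ) := Real.one_le_sqrt.2 (by exact_mod_cast hd)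
  have hwidth : ((ρ + ν) ^ 2 - (ρ - ν) ^ 2) / ((ρ - ν) / √d) + 2 ≤ (8 * √d + 2) * ν := by
    have h4 : ((ρ + ν) ^ 2 - (ρ - ν) ^ 2) / ((ρ - ν) / √d) = 4 * ρ * ν * √d / (ρ - ν) := by
      rw [div_div_eq_mul_div]; ring
    have h8 : 4 * ρ * ν * √d / (ρ - ν) ≤ 8 * √d * ν := by
      rw [div_le_iff₀ (by linarith)]
      nlinarith [mul_nonneg (by linarith : (0 : ℝ) ≤ ν) (by linarith : (0 : ℝ) ≤ √d)]
    linarith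
  calc (d : ℝ) * ((2 * (ρ + ν) + 1) ^ (d - 1) *
        (((ρ + ν) ^ 2 - (ρ - ν) ^ 2) / ((ρ - ν) / √d) + 2))
      ≤ d * ((4 * ρ) ^ (d - 1) * ((8 * √d + 2) * ν)) := by
        have hw0 : 0 ≤ ((ρ + ν) ^ 2 - (ρ - ν) ^ 2) / ((ρ - ν) / √d) + 2 := by
          have : 0 ≤ (ρ + ν) ^ 2 - (ρ - ν) ^ 2 := by nlinarith
          have : 0 ≤ (ρ - ν) / √d := div_nonneg (by linarith) (by positivity)
          positivity
        have hR : 2 * (ρ + ν) + 1 ≤ 4 * ρ := by linarith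
        have hρ : 0 ≤ 4 * ρ := by linarith
        exact mul_le_mul_of_nonneg_left (mul_le_mul (pow_le_pow_left₀ (by linarith) hR _) hwidth
          hw0 (by positivity)) (by positivity)
    _ = d * 4 ^ (d - 1) * (8 * √d + 2) * ρ ^ (d - 1) * ν := by ring

end Annulus

section Scales

variable {d : ℕ} {α : ℝ}

lemma one_le_nuscale (d n : ℕ) : 1 ≤ nuscale d n := Real.one_le_rpow one_le_two (by positivity)

lemma two_mul_nuscale_le_rhoscale {n : ℕ} (hd : 3 ≤ d) (hn : 4 ≤ n) :
    2 * nuscale d n ≤ rhoscale d n := by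
  have hd' : (3 : ℝ) ≤ d := by exact_mod_cast hd
  have hn' : (4 : ℝ) ≤ n := by exact_mod_cast hn
  rw [nuscale, rhoscale, ← Real.rpow_one_add' zero_le_two (by positivity)]
  apply Real.rpow_le_rpow_of_exponent_le one_le_two
  have h : 1 / (d : ℝ) ≤ 1 / 3 := one_div_le_one_div_of_le (by norm_num) hd'
  have h3 : 1 / (3 * (d : ℝ)) = 1 / 3 * (1 / d) := by ring
  rw [h3]
  nlinarith [mul_le_mul_of_nonneg_right h (by positivity : (0 : ℝ) ≤ n)]

lemma exists_ncard_annulus_le (hd : 3 ≤ d) :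
    ∃ C > 0, ∀ n ≥ 4, ∀ x : Fin d → ℤ,
      ((annulus d x n).ncard : ℝ) ≤ C * rhoscale d n ^ ((d : ℝ) - 1) * nuscale d n := by
  have hd0 : (0 : ℝ) < d := by exact_mod_cast (by omega : 0 < d)
  refine ⟨d * 4 ^ (d - 1) * (8 * √d + 2), by positivity, fun n hn x => ?_⟩
  have hpow : rhoscale d n ^ ((d : ℝ) - 1) = rhoscale d n ^ (d - 1) := by
    rw [← Real.rpow_natCast, Nat.cast_sub (by omega), Nat.cast_one]
  rw [hpow]
  exact ncard_annulus_le (by omega) (one_le_nuscale d n) (two_mul_nuscale_le_rhoscale hd hn) x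

lemma finite_annulus (d : ℕ) (x : Fin d → ℤ) (n : ℕ) : (annulus d x n).Finite :=
  ((finite_znorm_le _).preimage sub_left_injective.injOn).subset fun _ hy => hy.1

/-- `ρ(n)^{d-1} ν(n) g(n)^{-α}`: up to a constant, the expected number of deep traps in an
annulus `A_x(n)`. -/
noncomputable def annulusTrapScale (d : ℕ) (α : ℝ) (n : ℕ) : ℝ :=
  rhoscale d n ^ ((d : ℝ) - 1) * nuscale d n * gscale α n ^ (-α)

lemma annulusTrapScale_eq (hd : d ≠ 0) (hα : α ≠ 0) (n : ℕ) :
    annulusTrapScale d α n = ((2 : ℝ) ^ ((3 * (d : ℝ) ^ 2 - 10 * d + 4) / (6 * d))) ^ n := by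
  rw [annulusTrapScale, rhoscale, nuscale, gscale, ← Real.rpow_natCast,
    ← Real.rpow_mul zero_le_two, ← Real.rpow_mul zero_le_two, ← Real.rpow_mul zero_le_two,
    ← Real.rpow_add two_pos, ← Real.rpow_add two_pos]
  congr 1
  field_simp
  ring

lemma eventually_mul_le_annulusTrapScale (hd : 3 ≤ d) (hα : α ≠ 0) (c : ℝ) {k : ℝ}
    (hk : 0 < k) : ∀ᶠ n : ℕ in atTop, c * n ≤ k * annulusTrapScale d α n := by
  have hd' : (3 : ℝ) ≤ d := by exact_mod_cast hd
  set q : ℝ := (2 : ℝ) ^ ((3 * (d : ℝ) ^ 2 - 10 * d + 4) / (6 * d))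
  have hq : 1 < q := Real.one_lt_rpow one_lt_two (div_pos (by nlinarith) (by positivity))
  have hlim := tendsto_pow_const_div_const_pow_of_one_lt 1 hq
  filter_upwards [hlim.eventually (ge_mem_nhds (show (0 : ℝ) < k / (|c| + 1) by positivity))]
    with n hn
  rw [pow_one, div_le_div_iff₀ (by positivity) (by positivity)] at hn
  rw [annulusTrapScale_eq (by omega) hα]
  calc c * n ≤ (|c| + 1) * n := mul_le_mul_of_nonneg_right (by linarith [le_abs_self c])
        (Nat.cast_nonneg n)
    _ ≤ k * q ^ n := by nlinarith

lemma tendsto_gscale_atTop {α : ℝ} (hα : 0 < α) : Tendsto (gscale α) atTop atTop :=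
  (tendsto_rpow_atTop_of_base_gt_one 2 one_lt_two).comp
    (tendsto_natCast_atTop_atTop.atTop_div_const hα)

lemma ncard_bigD_le (d m n : ℕ) : (bigD d m n).ncard ≤ (2 * m + 1) ^ d * 2 ^ (d * n) := by
  have hr : 1 ≤ rscale n := Real.one_le_rpow one_le_two (by positivity)
  have hr' : rscale n ≤ 2 ^ n := by
    rw [rscale, ← Real.rpow_natCast]
    exact Real.rpow_le_rpow_of_exponent_le one_le_two
      (by linarith [(Nat.cast_nonneg n : (0 : ℝ) ≤ n)])
  have h : ((bigD d m n).ncard : ℝ) ≤ (2 * m + 1) ^ d * 2 ^ (d * n) := by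
    refine (ncard_znorm_le_le (by positivity)).trans ?_
    rw [pow_mul', ← mul_pow]
    refine pow_le_pow_left₀ (by positivity) ?_ d
    nlinarith [(Nat.cast_nonneg m : (0 : ℝ) ≤ m)]
  exact_mod_cast h

end Scales

lemma Nat.choose_mul_pow_le {p : ℝ} (hp : 0 ≤ p) (N a : ℕ) :
    (N.choose a : ℝ) * p ^ a ≤ (Real.exp 1 * N * p / a) ^ a := by
  have hfact : (0 : ℝ) < a.factorial := by exact_mod_cast a.factorial_pos
  have hstirling : (a : ℝ) ^ a ≤ Real.exp 1 ^ a * a.factorial := by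
    have h := Real.pow_div_factorial_le_exp (x := a) (Nat.cast_nonneg a) a
    rwa [div_le_iff₀ hfact, ← Real.exp_one_pow] at h
  calc (N.choose a : ℝ) * p ^ a ≤ (N : ℝ) ^ a / a.factorial * p ^ a :=
        mul_le_mul_of_nonneg_right (Nat.choose_le_pow_div a N) (by positivity)
    _ = (N * p) ^ a * (1 / a.factorial) := by ring
    _ ≤ (N * p) ^ a * (Real.exp 1 ^ a / (a : ℝ) ^ a) := by
        have hpos : (0 : ℝ) < (a : ℝ) ^ a := by
          rcases Nat.eq_zero_or_pos a with rfl | ha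
          · simp
          · positivity
        refine mul_le_mul_of_nonneg_left ?_ (by positivity)
        rw [div_le_div_iff₀ hfact hpos]
        linarith
    _ = (Real.exp 1 * N * p / a) ^ a := by ring

section Probability

variable {Ω ι : Type*} [MeasurableSpace Ω] {P : Measure Ω} {X : ι → Ω → ℝ}

lemma measure_le_card_filter_le_choose_mul_pow (hX : iIndepFun X P) (S : Finset ι) {u : ℝ}
    {q : ℝ≥0∞} (hq : ∀ i ∈ S, P {ω | u ≤ X i ω} ≤ q) (a : ℕ) :
    P {ω | a ≤ #{i ∈ S | u ≤ X i ω}} ≤ (#S).choose a * q ^ a := by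
  classical
  calc P {ω | a ≤ #{i ∈ S | u ≤ X i ω}}
      ≤ P (⋃ A ∈ S.powersetCard a, ⋂ i ∈ A, X i ⁻¹' Set.Ici u) := by
        refine measure_mono fun ω hω => ?_
        obtain ⟨A, hAS, hA⟩ := Finset.exists_subset_card_eq hω
        simp only [Set.mem_iUnion, Set.mem_iInter, Set.mem_preimage, Set.mem_Ici]
        exact ⟨A, Finset.mem_powersetCard.2 ⟨hAS.trans (Finset.filter_subset _ _), hA⟩,
          fun i hi => (Finset.mem_filter.1 (hAS hi)).2⟩
    _ ≤ ∑ A ∈ S.powersetCard a, P (⋂ i ∈ A, X i ⁻¹' Set.Ici u) := measure_biUnion_finset_le _ _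
    _ ≤ ∑ _A ∈ S.powersetCard a, q ^ a := by
        refine Finset.sum_le_sum fun A hA => ?_
        obtain ⟨hAS, rfl⟩ := Finset.mem_powersetCard.1 hA
        rw [hX.measure_inter_preimage_eq_mul A fun _ _ => measurableSet_Ici]
        exact Finset.prod_le_pow_card _ _ _ fun i hi => hq i (hAS hi)
    _ = (#S).choose a * q ^ a := by
        rw [Finset.sum_const, Finset.card_powersetCard, nsmul_eq_mul]

lemma measure_le_card_filter_le_inv_two_pow (hX : iIndepFun X P) (S : Finset ι) {u p : ℝ}
    (hp : 0 ≤ p) (hq : ∀ i ∈ S, P {ω | u ≤ X i ω} ≤ ENNReal.ofReal p) {a : ℕ}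
    (ha : 2 * Real.exp 1 * #S * p ≤ a) :
    P {ω | a ≤ #{i ∈ S | u ≤ X i ω}} ≤ 2⁻¹ ^ a := by
  refine (measure_le_card_filter_le_choose_mul_pow hX S hq a).trans ?_
  rw [← ENNReal.ofReal_natCast, ← ENNReal.ofReal_pow hp, ← ENNReal.ofReal_mul (by positivity),
    ← ENNReal.ofReal_ofNat 2, ← ENNReal.ofReal_inv_of_pos two_pos,
    ← ENNReal.ofReal_pow (by norm_num)]
  refine ENNReal.ofReal_le_ofReal ((Nat.choose_mul_pow_le hp _ a).trans ?_)
  exact pow_le_pow_left₀ (by positivity) (div_le_of_le_mul₀ (Nat.cast_nonneg a) (by norm_num)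
    (by linarith)) a

lemma ae_eventually_notMem_of_eventually_le {s : ℕ → Set Ω} {f : ℕ → ℝ≥0∞}
    (hf : ∑' n, f n ≠ ∞) (hs : ∀ᶠ n in atTop, P (s n) ≤ f n) :
    ∀ᵐ ω ∂P, ∀ᶠ n in atTop, ω ∉ s n := by
  obtain ⟨N, hN⟩ := eventually_atTop.1 hs
  have hsum : ∑' n, P (s (n + N)) ≠ ∞ :=
    ne_top_of_le_ne_top hf ((ENNReal.tsum_le_tsum fun n => hN _ (Nat.le_add_left N n)).trans
      (ENNReal.tsum_comp_le_tsum_of_injective (add_left_injective N) f))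
  filter_upwards [ae_eventually_notMem hsum] with ω hω
  filter_upwards [(tendsto_sub_atTop_nat N).eventually hω, eventually_ge_atTop N] with n hn hnN
  rwa [Nat.sub_add_cancel hnN] at hn

lemma natCast_mul_inv_two_pow_le {N B k a n : ℕ} (hN : N ≤ B * 2 ^ (k * n))
    (ha : (k + 1) * n ≤ a) : (N : ℝ≥0∞) * 2⁻¹ ^ a ≤ B * 2⁻¹ ^ n := by
  calc (N : ℝ≥0∞) * 2⁻¹ ^ a ≤ (B * 2 ^ (k * n)) * 2⁻¹ ^ ((k + 1) * n) :=
        mul_le_mul' (by exact_mod_cast hN) (pow_le_pow_right_of_le_one' (by norm_num) ha)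
    _ = B * 2⁻¹ ^ n * (2 * 2⁻¹) ^ (k * n) := by ring
    _ = B * 2⁻¹ ^ n := by
        rw [ENNReal.mul_inv_cancel two_ne_zero ENNReal.ofNat_ne_top, one_pow, mul_one]

end Probability

lemma IsEnv.eventually_measure_le {Ω : Type*} [MeasurableSpace Ω] {P : Measure Ω} {d : ℕ}
    {α : ℝ} {L : ℝ → ℝ} {τ : (Fin d → ℤ) → Ω → ℝ} (hτ : IsEnv P d α L τ) (hα : 0 < α)
    {ε : ℝ} (hε : 0 < ε) :
    ∀ᶠ n : ℕ in atTop, ∀ y, P {ω | ε * gscale α n ≤ τ y ω}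
      ≤ ENNReal.ofReal (2 * ε ^ (-α) * gscale α n ^ (-α)) := by
  have hu := (tendsto_gscale_atTop hα).const_mul_atTop hε
  filter_upwards [hu.eventually_ge_atTop 1,
    hu.eventually (hτ.decay.eventually (ge_mem_nhds one_pos))] with n h1 hL y
  have hg : 0 < gscale α n := Real.rpow_pos_of_pos two_pos _
  rw [hτ.tail y _ h1, Real.mul_rpow hε.le hg.le]
  refine ENNReal.ofReal_le_ofReal ?_
  have : 0 ≤ ε ^ (-α) * gscale α n ^ (-α) := by positivity
  nlinarith

section DeepSites

variable {Ω : Type*} {d : ℕ} {α : ℝ} {τ : (Fin d → ℤ) → Ω → ℝ} {ε : ℝ}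

noncomputable def deepSites (τ : (Fin d → ℤ) → Ω → ℝ) (α ε : ℝ) (x : Fin d → ℤ) (n : ℕ)
    (ω : Ω) : Finset (Fin d → ℤ) :=
  {y ∈ (finite_annulus d x n).toFinset | ε * gscale α n ≤ τ y ω}

lemma ncard_traps_inter_annulus_le (m : ℕ) (M : ℝ) (x : Fin d → ℤ) (n : ℕ) (ω : Ω) :
    (traps τ α m ε M n ω ∩ annulus d x n).ncard ≤ #(deepSites τ α ε x n ω) := by
  rw [← Set.ncard_coe_finset]
  exact Set.ncard_le_ncard fun y hy =>
    Finset.mem_filter.2 ⟨(Set.Finite.mem_toFinset _).2 hy.2, hy.1.2.1⟩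

variable [MeasurableSpace Ω] {P : Measure Ω}

lemma measure_exists_deepSites_ge_le (hτ : iIndepFun τ P) (m : ℕ) {n : ℕ} {p : ℝ} (hp : 0 ≤ p)
    (htail : ∀ y, P {ω | ε * gscale α n ≤ τ y ω} ≤ ENNReal.ofReal p) {a : ℕ}
    (ha : ∀ x, 2 * Real.exp 1 * (annulus d x n).ncard * p ≤ a) (hgrowth : (d + 1) * n ≤ a) :
    P {ω | ∃ x ∈ bigD d m n, a ≤ #(deepSites τ α ε x n ω)} ≤ ((2 * m + 1) ^ d : ℕ) * 2⁻¹ ^ n := by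
  set D := (finite_znorm_le _ : (bigD d m n).Finite).toFinset
  have hD : #D ≤ (2 * m + 1) ^ d * 2 ^ (d * n) :=
    (Set.ncard_eq_toFinset_card _ _).symm.trans_le (ncard_bigD_le d m n)
  calc P {ω | ∃ x ∈ bigD d m n, a ≤ #(deepSites τ α ε x n ω)}
      ≤ P (⋃ x ∈ D, {ω | a ≤ #(deepSites τ α ε x n ω)}) :=
        measure_mono fun ω ⟨x, hx, h⟩ => Set.mem_biUnion ((Set.Finite.mem_toFinset _).2 hx) h
    _ ≤ ∑ x ∈ D, P {ω | a ≤ #(deepSites τ α ε x n ω)} := measure_biUnion_finset_le _ _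
    _ ≤ ∑ _x ∈ D, 2⁻¹ ^ a := Finset.sum_le_sum fun x _ =>
        measure_le_card_filter_le_inv_two_pow hτ _ hp (fun y _ => htail y)
          (by rw [← Set.ncard_eq_toFinset_card _ (finite_annulus d x n)]; exact ha x)
    _ ≤ ((2 * m + 1) ^ d : ℕ) * 2⁻¹ ^ n := by
        rw [Finset.sum_const, nsmul_eq_mul]
        exact natCast_mul_inv_two_pow_le hD hgrowth

lemma exists_eventually_measure_exists_deepSites_gt_le {L : ℝ → ℝ} (hd : 3 ≤ d) (hα : 0 < α)
    (hτ : IsEnv P d α L τ) (hε : 0 < ε) (m : ℕ) :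
    ∃ K : ℝ, ∀ᶠ n in atTop,
      P {ω | ∃ x ∈ bigD d m n, K * annulusTrapScale d α n < #(deepSites τ α ε x n ω)}
        ≤ ((2 * m + 1) ^ d : ℕ) * 2⁻¹ ^ n := by
  obtain ⟨C, hC, hannulus⟩ := exists_ncard_annulus_le hd
  set K := 4 * Real.exp 1 * C * ε ^ (-α)
  have hK : 0 < K := by positivity
  refine ⟨K, ?_⟩
  filter_upwards [hτ.eventually_measure_le hα hε, eventually_ge_atTop 4,
    eventually_mul_le_annulusTrapScale hd hα.ne' (d + 1) hK] with n htail hn hgrowth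
  have hg : 0 < gscale α n := Real.rpow_pos_of_pos two_pos _
  have hscale : 0 ≤ annulusTrapScale d α n := by
    rw [annulusTrapScale_eq (by omega) hα.ne']; positivity
  set a := ⌊K * annulusTrapScale d α n⌋₊ + 1
  have hKa : K * annulusTrapScale d α n < a := by push_cast [a]; exact Nat.lt_floor_add_one _
  have hevent : ∀ ω x, K * annulusTrapScale d α n < #(deepSites τ α ε x n ω)
      ↔ a ≤ #(deepSites τ α ε x n ω) := fun ω x => (Nat.floor_lt (by positivity)).symm
  simp_rw [hevent]
  refine measure_exists_deepSites_ge_le hτ.indep m (by positivity) htail (fun x => ?_)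
    (by exact_mod_cast hgrowth.trans hKa.le)
  calc 2 * Real.exp 1 * (annulus d x n).ncard * (2 * ε ^ (-α) * gscale α n ^ (-α))
      ≤ 2 * Real.exp 1 * (C * rhoscale d n ^ ((d : ℝ) - 1) * nuscale d n) *
          (2 * ε ^ (-α) * gscale α n ^ (-α)) := by
        gcongr; exact hannulus n hn x
    _ = K * annulusTrapScale d α n := by rw [annulusTrapScale]; ring
    _ ≤ a := hKa.le

end DeepSites

theorem stmt_4_general {Ω : Type*} [MeasurableSpace Ω] (P : Measure Ω)
    (d : ℕ) (hd : 3 ≤ d) (α : ℝ) (hα : α ∈ Set.Ioo (0 : ℝ) 1) (L : ℝ → ℝ)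
    (τ : (Fin d → ℤ) → Ω → ℝ) (hτ : IsEnv P d α L τ)
    (ε M : ℝ) (hε : 0 < ε) (m : ℕ) :
    ∃ K : ℝ, ∀ᵐ ω ∂P, ∃ n₀ : ℕ, ∀ n ≥ n₀, ∀ x ∈ bigD d m n,
      ((traps τ α m ε M n ω ∩ annulus d x n).ncard : ℝ)
        ≤ K * rhoscale d n ^ ((d : ℝ) - 1) * nuscale d n * gscale α n ^ (-α) := by
  obtain ⟨K, hK⟩ := exists_eventually_measure_exists_deepSites_gt_le hd hα.1 hτ hε m
  have hsum : ∑' n : ℕ, (((2 * m + 1) ^ d : ℕ) : ℝ≥0∞) * 2⁻¹ ^ n ≠ ∞ := by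
    rw [ENNReal.tsum_mul_left, ENNReal.tsum_geometric, ENNReal.one_sub_inv_two, inv_inv]
    exact ENNReal.mul_ne_top (ENNReal.natCast_ne_top _) ENNReal.ofNat_ne_top
  refine ⟨K, ?_⟩
  filter_upwards [ae_eventually_notMem_of_eventually_le hsum hK] with ω hω
  obtain ⟨n₀, hn₀⟩ := eventually_atTop.1 hω
  refine ⟨n₀, fun n hn x hx => ?_⟩
  calc ((traps τ α m ε M n ω ∩ annulus d x n).ncard : ℝ)
      ≤ #(deepSites τ α ε x n ω) := by exact_mod_cast ncard_traps_inter_annulus_le m M x n ω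
    _ ≤ K * annulusTrapScale d α n := not_lt.1 fun h => hn₀ n hn ⟨x, hx, h⟩
    _ = K * rhoscale d n ^ ((d : ℝ) - 1) * nuscale d n * gscale α n ^ (-α) := by
        rw [annulusTrapScale]; ring

theorem stmt_4 {Ω : Type*} [MeasurableSpace Ω] (P : Measure Ω) [IsProbabilityMeasure P]
    (d : ℕ) (hd : 3 ≤ d) (α : ℝ) (hα : α ∈ Set.Ioo (0 : ℝ) 1) (L : ℝ → ℝ)
    (τ : (Fin d → ℤ) → Ω → ℝ) (hτ : IsEnv P d α L τ)
    (ε M : ℝ) (hε : 0 < ε) (hε1 : ε < 1) (hM : 1 < M) (m : ℕ) (hm : 1 ≤ m) :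
    ∃ K : ℝ, ∀ᵐ ω ∂P, ∃ n₀ : ℕ, ∀ n ≥ n₀, ∀ x ∈ bigD d m n,
      ((traps τ α m ε M n ω ∩ annulus d x n).ncard : ℝ)
        ≤ K * rhoscale d n ^ ((d : ℝ) - 1) * nuscale d n * gscale α n ^ (-α) :=
  stmt_4_general P d hd α hα L τ hτ ε M hε m
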